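/- For every p ∈ (0,1) and every ω ∈ ℂ, the family (p + (1−p) e^{ω/2^n})_{n≥1} is multipliable and ∏_{n=1}^∞ (p + (1−p) e^{ω/2^n}) = I_p(ω). -/

import Mathlib

open MeasureTheory

/-- The probability measure on `{0,1}` (encoded as `Bool`, `false` ↔ digit `0`,
`true` ↔ digit `1`) giving mass `p` to the digit `0` and mass `1 - p` to the digit `1`. -/
noncomputable def bernoulliBool (p : ℝ) : Measure Bool :=
  ENNReal.ofReal p • Measure.dirac false + ENNReal.ofReal (1 - p) • Measure.dirac true

/-- `ν` is the infinite product, over `n ≥ 1` (indexed here by `ℕ`, where index `n`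
stands for the digit `n+1`), of the Bernoulli measures `bernoulliBool p`:
it is characterized as the projective limit of the finite product measures. -/
def IsBernoulliProduct (p : ℝ) (ν : Measure (ℕ → Bool)) : Prop :=
  IsProjectiveLimit ν fun J : Finset ℕ => Measure.pi fun _ : J => bernoulliBool p

/-- The binary expansion map sending a 0-1 sequence `(x_n)_{n ≥ 1}` to
`∑_{n=1}^∞ x_n 2^{-n}` (index `n : ℕ` stands for the digit `n+1`). -/
noncomputable def binExpand (x : ℕ → Bool) : ℝ :=
  ∑' n : ℕ, if x n then ((2 : ℝ) ^ (n + 1))⁻¹ else 0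

/-- `μ` is the Bernoulli measure `μ_p` on `ℝ`: the pushforward under the binary
expansion map of the infinite product of Bernoulli measures on `{0,1}`. -/
def IsBernoulliMeasure (p : ℝ) (μ : Measure ℝ) : Prop :=
  ∃ ν : Measure (ℕ → Bool), IsBernoulliProduct p ν ∧ μ = ν.map binExpand

/-!
Under the product measure the binary digits are independent, so `e^{ω x} = ∏ₙ e^{ω xₙ 2^{-n}}`
integrates factor by factor: the partial product `∏_{n ≤ N} (p + (1 - p) e^{ω/2^n})` is the
integral of `e^{ω s_N}`, where `s_N` is the partial sum of the binary expansion, and these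
integrals converge to `I_p(ω)` by dominated convergence (`0 ≤ s_N ≤ 1`). Multipliability holds
because `p + (1 - p) e^z = 1 + (1 - p)(e^z - 1)` and `|e^z - 1| ≤ 2|z|` for small `z`.
-/

open Filter Topology Finset

lemma summable_cexp_sub_one {ι : Type*} {f : ι → ℂ} (hf : Summable f) :
    Summable fun i => Complex.exp (f i) - 1 :=
  (hf.norm.mul_left 2).of_norm_bounded_eventually <| by
    filter_upwards [hf.norm.tendsto_cofinite_zero.eventually_le_const one_pos] with i hi
      using Complex.norm_exp_sub_one_le hi

lemma summable_div_two_pow_succ (ω : ℂ) : Summable fun n : ℕ => ω / 2 ^ (n + 1) := by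
  have h : ‖(2⁻¹ : ℂ)‖ < 1 := by norm_num
  refine ((summable_geometric_of_norm_lt_one h).mul_left (ω / 2)).congr fun n => ?_
  rw [inv_pow, pow_succ]
  field_simp

lemma multipliable_bernoulli_factor (p : ℝ) (ω : ℂ) :
    Multipliable fun n : ℕ => (p : ℂ) + (1 - p) * Complex.exp (ω / 2 ^ (n + 1)) := by
  have h := Complex.multipliable_one_add_of_summable
    ((summable_cexp_sub_one (summable_div_two_pow_succ ω)).mul_left (1 - (p : ℂ)))
  exact h.congr fun n => by ring

instance (p : ℝ) : IsFiniteMeasure (bernoulliBool p) := ⟨by simp [bernoulliBool]⟩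

lemma integral_bernoulliBool {E : Type*} [NormedAddCommGroup E] [NormedSpace ℝ E]
    [CompleteSpace E] {p : ℝ} (hp₀ : 0 ≤ p) (hp₁ : p ≤ 1) (g : Bool → E) :
    ∫ b, g b ∂bernoulliBool p = p • g false + (1 - p) • g true := by
  have hint (c : ℝ) (b : Bool) : Integrable g (ENNReal.ofReal c • Measure.dirac b) :=
    Integrable.of_finite.smul_measure ENNReal.ofReal_ne_top
  rw [bernoulliBool, integral_add_measure (hint _ _) (hint _ _),
    integral_smul_measure, integral_smul_measure, integral_dirac, integral_dirac,
    ENNReal.toReal_ofReal hp₀, ENNReal.toReal_ofReal (sub_nonneg.2 hp₁)]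

lemma IsBernoulliProduct.integral_prod {p : ℝ} {ν : Measure (ℕ → Bool)}
    (hν : IsBernoulliProduct p ν) {𝕜 : Type*} [RCLike 𝕜] (g : ℕ → Bool → 𝕜)
    (J : Finset ℕ) :
    ∫ x, ∏ n ∈ J, g n (x n) ∂ν = ∏ n ∈ J, ∫ b, g n b ∂bernoulliBool p := by
  have hgm : Measurable fun y : J → Bool => ∏ i : J, g i (y i) :=
    Finset.measurable_prod _ fun i _ => (measurable_of_countable _).comp (measurable_pi_apply i)
  calc ∫ x, ∏ n ∈ J, g n (x n) ∂ν
      = ∫ x, ∏ i : J, g i (J.restrict x i) ∂ν := by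
        simp only [Finset.restrict, Finset.prod_coe_sort J fun n => g n _]
    _ = ∫ y, ∏ i : J, g i (y i) ∂(ν.map J.restrict) :=
        (integral_map (Finset.measurable_restrict (X := fun _ => Bool) J).aemeasurable
          hgm.aestronglyMeasurable).symm
    _ = ∏ i : J, ∫ b, g i b ∂bernoulliBool p := by
        rw [hν J]; exact integral_fintype_prod_eq_prod (fun (i : J) b => g i b)
    _ = ∏ n ∈ J, ∫ b, g n b ∂bernoulliBool p :=
        Finset.prod_coe_sort J fun n => ∫ b, g n b ∂bernoulliBool p

noncomputable def binDigit (n : ℕ) (b : Bool) : ℝ := if b then ((2 : ℝ) ^ (n + 1))⁻¹ else 0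

lemma binDigit_nonneg (n : ℕ) (b : Bool) : 0 ≤ binDigit n b := by
  unfold binDigit; split <;> positivity

lemma binDigit_le (n : ℕ) (b : Bool) : binDigit n b ≤ ((2 : ℝ) ^ (n + 1))⁻¹ := by
  unfold binDigit; split
  · exact le_rfl
  · positivity

lemma hasSum_inv_two_pow_succ : HasSum (fun n : ℕ => ((2 : ℝ) ^ (n + 1))⁻¹) 1 := by
  convert hasSum_geometric_two' 1 using 2 with n
  rw [pow_succ']
  field_simp

lemma measurable_binDigit_eval (n : ℕ) : Measurable fun x : ℕ → Bool => binDigit n (x n) :=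
  (measurable_of_countable (binDigit n)).comp (measurable_pi_apply n)

lemma summable_binDigit (x : ℕ → Bool) : Summable fun n => binDigit n (x n) :=
  hasSum_inv_two_pow_succ.summable.of_nonneg_of_le (fun n => binDigit_nonneg n _)
    fun n => binDigit_le n _

lemma sum_binDigit_mem_Icc (x : ℕ → Bool) (s : Finset ℕ) :
    ∑ n ∈ s, binDigit n (x n) ∈ Set.Icc (0 : ℝ) 1 :=
  ⟨sum_nonneg fun n _ => binDigit_nonneg n _,
    (sum_le_sum fun n _ => binDigit_le n (x n)).trans
      (hasSum_inv_two_pow_succ.summable.sum_le_tsum s (fun n _ => by positivity)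
        |>.trans hasSum_inv_two_pow_succ.tsum_eq.le)⟩

lemma binExpand_mem_Icc (x : ℕ → Bool) : binExpand x ∈ Set.Icc (0 : ℝ) 1 :=
  isClosed_Icc.mem_of_tendsto (summable_binDigit x).hasSum.tendsto_sum_nat
    (Eventually.of_forall fun N => sum_binDigit_mem_Icc x (range N))

lemma measurable_binExpand : Measurable binExpand :=
  measurable_of_tendsto_metrizable
    (fun N => Finset.measurable_sum (range N) fun n _ => measurable_binDigit_eval n)
    (tendsto_pi_nhds.2 fun x => (summable_binDigit x).hasSum.tendsto_sum_nat)

lemma setIntegral_Icc_map_binExpand {E : Type*} [NormedAddCommGroup E] [NormedSpace ℝ E]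
    {ν : Measure (ℕ → Bool)} {f : ℝ → E} (hf : AEStronglyMeasurable f (ν.map binExpand)) :
    ∫ t in Set.Icc (0 : ℝ) 1, f t ∂(ν.map binExpand) = ∫ x, f (binExpand x) ∂ν := by
  have hIcc : ∀ᵐ t ∂(ν.map binExpand), t ∈ Set.Icc (0 : ℝ) 1 :=
    (ae_map_iff measurable_binExpand.aemeasurable measurableSet_Icc).2
      (Eventually.of_forall binExpand_mem_Icc)
  rw [Measure.restrict_eq_self_of_ae_mem hIcc,
    integral_map measurable_binExpand.aemeasurable hf]

lemma integral_cexp_mul_binDigit {p : ℝ} (hp₀ : 0 ≤ p) (hp₁ : p ≤ 1) (ω : ℂ) (n : ℕ) :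
    ∫ b, Complex.exp (ω * binDigit n b) ∂bernoulliBool p =
      p + (1 - p) * Complex.exp (ω / 2 ^ (n + 1)) := by
  rw [integral_bernoulliBool hp₀ hp₁]
  simp [binDigit, div_eq_mul_inv, Complex.real_smul]

lemma prod_cexp_mul_binDigit (ω : ℂ) (x : ℕ → Bool) (s : Finset ℕ) :
    ∏ n ∈ s, Complex.exp (ω * binDigit n (x n)) =
      Complex.exp (ω * ↑(∑ n ∈ s, binDigit n (x n))) := by
  rw [Complex.ofReal_sum, mul_sum, Complex.exp_sum]

lemma norm_cexp_mul_le {ω : ℂ} {t : ℝ} (ht : t ∈ Set.Icc (0 : ℝ) 1) :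
    ‖Complex.exp (ω * t)‖ ≤ Real.exp ‖ω‖ := by
  refine (Complex.norm_exp_le_exp_norm _).trans (Real.exp_le_exp.2 ?_)
  rw [norm_mul, Complex.norm_real, Real.norm_of_nonneg ht.1]
  exact mul_le_of_le_one_right (norm_nonneg ω) ht.2

lemma IsBernoulliProduct.tendsto_prod_bernoulli_factor {p : ℝ} (hp₀ : 0 ≤ p) (hp₁ : p ≤ 1)
    {ν : Measure (ℕ → Bool)} (hν : IsBernoulliProduct p ν) (ω : ℂ) :
    Tendsto (fun N => ∏ n ∈ range N, ((p : ℂ) + (1 - p) * Complex.exp (ω / 2 ^ (n + 1))))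
      atTop (𝓝 (∫ x, Complex.exp (ω * binExpand x) ∂ν)) := by
  have := hν.isFiniteMeasure
  have hpartial : ∀ N, ∏ n ∈ range N, ((p : ℂ) + (1 - p) * Complex.exp (ω / 2 ^ (n + 1))) =
      ∫ x, Complex.exp (ω * ↑(∑ n ∈ range N, binDigit n (x n))) ∂ν := fun N => by
    simp_rw [← prod_cexp_mul_binDigit,
      hν.integral_prod (fun n b => Complex.exp (ω * binDigit n b)),
      integral_cexp_mul_binDigit hp₀ hp₁]
  simp_rw [hpartial]
  have hexp : Continuous fun t : ℝ => Complex.exp (ω * t) := by fun_prop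
  refine tendsto_integral_of_dominated_convergence (fun _ => Real.exp ‖ω‖)
    (fun N => (hexp.measurable.comp (Finset.measurable_sum _ fun n _ =>
      measurable_binDigit_eval n)).aestronglyMeasurable)
    (integrable_const _)
    (fun N => Eventually.of_forall fun x => norm_cexp_mul_le (sum_binDigit_mem_Icc x _))
    (Eventually.of_forall fun x =>
      (hexp.tendsto _).comp (summable_binDigit x).hasSum.tendsto_sum_nat)

/-- For `p ∈ (0,1)` and `ω ∈ ℂ`, the family
`(p + (1-p) e^{ω/2^n})_{n ≥ 1}` is multipliable and its product equals
`I_p(ω) = ∫_0^1 e^{ωx} dμ_p(x)` (index `n : ℕ` stands for `n+1 ≥ 1`). -/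
theorem stmt7 (p : ℝ) (hp : p ∈ Set.Ioo (0 : ℝ) 1) (μ : Measure ℝ)
    (hμ : IsBernoulliMeasure p μ) (ω : ℂ) :
    Multipliable (fun n : ℕ => (p : ℂ) + (1 - p) * Complex.exp (ω / 2 ^ (n + 1))) ∧
      ∏' n : ℕ, ((p : ℂ) + (1 - p) * Complex.exp (ω / 2 ^ (n + 1))) =
        ∫ x in Set.Icc (0 : ℝ) 1, Complex.exp (ω * x) ∂μ := by
  obtain ⟨ν, hν, rfl⟩ := hμ
  have hmult := multipliable_bernoulli_factor p ω
  refine ⟨hmult, ?_⟩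
  have hexp : Continuous fun t : ℝ => Complex.exp (ω * t) := by fun_prop
  rw [setIntegral_Icc_map_binExpand hexp.aestronglyMeasurable]
  exact tendsto_nhds_unique hmult.hasProd.tendsto_prod_nat
    (hν.tendsto_prod_bernoulli_factor hp.1.le hp.2.le ω)
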